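/- Let n₁ < n₂ < n₃ be natural numbers and let T be a set of functions from the interval [n₁,n₃] to {0,1} with m(T) = a < 1/2, where m(T) = |T| · 2^{-(n₃-n₁+1)}. Then for every l ∈ [n₂,n₃] there exists a function s : [n₂,n₃] → {0,1} with s(l) = 0 such that the set T[s] = {t : [n₁,n₂) → {0,1} : t⌢s ∈ T} satisfies |T[s]| · 2^{-(n₂-n₁)} ≤ 2a. -/
import Mathlib


open Set Filter

/- Functions `t : 2^{[n₁,n₃]}` are represented as total functions `ℕ → Bool` that are
`false` off `[n₁,n₃]`; `T[s]` is represented by the set of members of `T` that agree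
with `s` on `[n₂,n₃]`, and cardinalities are computed with `Set.ncard`. -/

theorem exists_small_fiber (n₁ n₂ n₃ : ℕ) (h12 : n₁ < n₂) (h23 : n₂ < n₃)
    (T : Set (ℕ → Bool))
    (hTsupp : ∀ t ∈ T, ∀ i, (i < n₁ ∨ n₃ < i) → t i = false)
    (a : ℝ) (ha : (T.ncard : ℝ) / 2 ^ (n₃ - n₁ + 1) = a) (ha2 : a < 1/2) :
    ∀ l, n₂ ≤ l → l ≤ n₃ →
      ∃ s : ℕ → Bool, s l = false ∧
        ({w ∈ T | ∀ i, n₂ ≤ i → i ≤ n₃ → w i = s i}.ncard : ℝ) / 2 ^ (n₂ - n₁) ≤ 2 * a := by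
  classical
  intro l hl2 hl3
  -- T is finite
  have hTfin : T.Finite := by
    have h : Set.InjOn (fun w : ℕ → Bool => fun i : ↥(Finset.Icc n₁ n₃) => w i) T := by
      intro w₁ h₁ w₂ h₂ h
      funext i
      by_cases hi : i ∈ Finset.Icc n₁ n₃
      · exact congrFun h ⟨i, hi⟩
      · rw [Finset.mem_Icc] at hi
        rw [hTsupp w₁ h₁ i (by omega), hTsupp w₂ h₂ i (by omega)]
    exact Set.Finite.of_finite_image (Set.toFinite _) h
  -- the index finset
  set X : Finset ℕ := (Finset.Icc n₂ n₃).erase l with hX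
  have hXcard : X.card = n₃ - n₂ := by
    rw [hX, Finset.card_erase_of_mem (Finset.mem_Icc.mpr ⟨hl2, hl3⟩), Nat.card_Icc]
    omega
  -- extension map
  set e : (↥X → Bool) → (ℕ → Bool) := fun f i => if h : i ∈ X then f ⟨i, h⟩ else false with he
  have hinj : Function.Injective e := by
    intro f g hfg
    funext x
    have := congrFun hfg x.1
    simpa [he, x.2] using this
  set S : Finset (ℕ → Bool) := Finset.univ.image e with hS
  have hScard : S.card = 2 ^ (n₃ - n₂) := by
    rw [hS, Finset.card_image_of_injective _ hinj, Finset.card_univ, Fintype.card_fun]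
    simp [hXcard]
  have hSne : S.Nonempty := ⟨e (fun _ => false), by
    rw [hS]; exact Finset.mem_image_of_mem e (Finset.mem_univ (fun _ => false))⟩
  -- key map
  set k : (ℕ → Bool) → (ℕ → Bool) := fun w i => if n₂ ≤ i ∧ i ≤ n₃ then w i else false with hk
  set T₀ : Finset (ℕ → Bool) := hTfin.toFinset.filter (fun w => w l = false) with hT₀
  have hkmem : ∀ w ∈ T₀, k w ∈ S := by
    intro w hw
    rw [hT₀, Finset.mem_filter] at hw
    rw [hS, Finset.mem_image]
    refine ⟨fun x => w x.1, Finset.mem_univ _, ?_⟩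
    funext i
    by_cases hi : i ∈ X
    · have hi' := hi
      rw [hX, Finset.mem_erase, Finset.mem_Icc] at hi'
      simp [he, hk, hi, hi'.2.1, hi'.2.2]
    · have hi' := hi
      rw [hX, Finset.mem_erase, Finset.mem_Icc] at hi'
      push_neg at hi'
      by_cases hil : i = l
      · subst hil
        simp [he, hk, hi, hl2, hl3, hw.2]
      · have : ¬ (n₂ ≤ i ∧ i ≤ n₃) := fun h => by have := hi' hil h.1; omega
        simp [he, hk, hi, this]
  -- fiberwise count
  have hsum : T₀.card = ∑ s ∈ S, (T₀.filter (fun w => k w = s)).card :=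
    Finset.card_eq_sum_card_fiberwise hkmem
  -- minimal fiber
  obtain ⟨s₀, hs₀S, hmin⟩ := S.exists_min_image (fun s => (T₀.filter (fun w => k w = s)).card) hSne
  have hbound : 2 ^ (n₃ - n₂) * (T₀.filter (fun w => k w = s₀)).card ≤ T.ncard := by
    have h1 : S.card • (T₀.filter (fun w => k w = s₀)).card ≤
        ∑ s ∈ S, (T₀.filter (fun w => k w = s)).card :=
      Finset.card_nsmul_le_sum _ _ _ (fun x hx => hmin x hx)
    rw [← hsum, smul_eq_mul, hScard] at h1
    refine h1.trans ?_
    rw [Set.ncard_eq_toFinset_card _ hTfin]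
    exact Finset.card_filter_le _ _
  -- structure of s₀
  obtain ⟨f₀, -, hf₀⟩ := Finset.mem_image.mp hs₀S
  have hs₀l : s₀ l = false := by
    rw [← hf₀]
    have : l ∉ X := by simp [hX]
    simp [he, this]
  have hs₀out : ∀ i, ¬(n₂ ≤ i ∧ i ≤ n₃) → s₀ i = false := by
    intro i hi
    have hiX : i ∉ X := by
      rw [hX, Finset.mem_erase, Finset.mem_Icc]
      tauto
    rw [← hf₀]
    simp [he, hiX]
  refine ⟨s₀, hs₀l, ?_⟩
  -- identify the set with the fiber
  have hsetEq : {w ∈ T | ∀ i, n₂ ≤ i → i ≤ n₃ → w i = s₀ i} =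
      ↑(T₀.filter (fun w => k w = s₀)) := by
    ext w
    simp only [Set.mem_setOf_eq, Finset.coe_filter, hT₀, Finset.mem_filter,
      Set.Finite.mem_toFinset]
    constructor
    · rintro ⟨hwT, hagree⟩
      have hwl : w l = false := by rw [hagree l hl2 hl3, hs₀l]
      refine ⟨⟨hwT, hwl⟩, ?_⟩
      funext i
      by_cases hi : n₂ ≤ i ∧ i ≤ n₃
      · simp [hk, hi, hagree i hi.1 hi.2]
      · simp [hk, hi, hs₀out i hi]
    · rintro ⟨⟨hwT, hwl⟩, hkw⟩
      refine ⟨hwT, fun i hi1 hi2 => ?_⟩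
      have := congrFun hkw i
      simpa [hk, hi1, hi2] using this
  rw [hsetEq, Set.ncard_coe_finset]
  -- final arithmetic
  rw [← ha]
  have hcast : ((T₀.filter (fun w => k w = s₀)).card : ℝ) * 2 ^ (n₃ - n₂) ≤ (T.ncard : ℝ) := by
    have := hbound
    push_cast
    calc ((T₀.filter (fun w => k w = s₀)).card : ℝ) * 2 ^ (n₃ - n₂)
        = ((2 ^ (n₃ - n₂) * (T₀.filter (fun w => k w = s₀)).card : ℕ) : ℝ) := by push_cast; ring
      _ ≤ ((T.ncard : ℕ) : ℝ) := by exact_mod_cast Nat.cast_le.mpr this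
  have hexp : n₃ - n₁ + 1 = (n₂ - n₁) + (n₃ - n₂) + 1 := by omega
  have h2 : (0:ℝ) < 2 ^ (n₂ - n₁) := by positivity
  have h3 : (0:ℝ) < 2 ^ (n₃ - n₂) := by positivity
  rw [hexp, div_le_iff₀ h2, pow_add, pow_add, pow_one]
  have heq : 2 * ((T.ncard : ℝ) / (2 ^ (n₂ - n₁) * 2 ^ (n₃ - n₂) * 2)) * 2 ^ (n₂ - n₁)
      = (T.ncard : ℝ) / 2 ^ (n₃ - n₂) := by field_simp
  rw [heq, le_div_iff₀ h3]
  exact hcast
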